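/- Let x be irrational in (0,1) with a_n = a_{n+1} = 1, and set m = min{a_{n-1}, a_{n+2}}, M = max{a_{n-1}, a_{n+2}} with 1 ≤ m < M. Then min{Θ_{n-1}(x), Θ_n(x)} ≤ (m+1)(M+1)/((m+1)M + (m+2)(M+1)) and max{Θ_{n-1}(x), Θ_n(x)} ≥ (m+2)M/((m+1)M + (m+2)(M+1)). -/

import Mathlib

/-- The Gauss map `T(x) = 1/x - ⌊1/x⌋`, with `T(0) = 0`. -/
noncomputable def gaussMap (x : ℝ) : ℝ := if x = 0 then 0 else 1 / x - ⌊1 / x⌋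

/-- The `n`-th partial quotient `a_n` of the RCF expansion of `x` (for `n ≥ 1`). -/
noncomputable def rcfA (x : ℝ) (n : ℕ) : ℤ := ⌊1 / gaussMap^[n - 1] x⌋

/-- Numerators `p_n` of the RCF convergents of `x ∈ (0,1)`. -/
noncomputable def rcfP (x : ℝ) : ℕ → ℤ
  | 0 => 0
  | 1 => 1
  | n + 2 => rcfA x (n + 2) * rcfP x (n + 1) + rcfP x n

/-- Denominators `q_n` of the RCF convergents of `x ∈ (0,1)`. -/
noncomputable def rcfQ (x : ℝ) : ℕ → ℤ
  | 0 => 1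
  | 1 => rcfA x 1
  | n + 2 => rcfA x (n + 2) * rcfQ x (n + 1) + rcfQ x n

/-- Approximation coefficient `Θ_n(x) = q_n² |x - p_n/q_n|`. -/
noncomputable def Theta (x : ℝ) (n : ℕ) : ℝ :=
  (rcfQ x n : ℝ) ^ 2 * |x - (rcfP x n : ℝ) / (rcfQ x n : ℝ)|

lemma tail_mem (x : ℝ) (hx : x ∈ Set.Ioo (0:ℝ) 1) (hirr : Irrational x) (k : ℕ) :
    gaussMap^[k] x ∈ Set.Ioo (0:ℝ) 1 ∧ Irrational (gaussMap^[k] x) := by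
  induction k with
  | zero => exact ⟨hx, hirr⟩
  | succ k ih =>
    obtain ⟨⟨h0, h1⟩, hi⟩ := ih
    rw [Function.iterate_succ_apply']
    set y := gaussMap^[k] x with hy
    have hy0 : y ≠ 0 := ne_of_gt h0
    have hinv : Irrational (1 / y) := by
      rw [one_div]; exact hi.inv
    have hg : gaussMap y = Int.fract (1 / y) := by
      rw [gaussMap, if_neg hy0, Int.fract]
    rw [hg]
    have hfrac : Irrational (Int.fract (1 / y)) := by
      rw [Int.fract]
      exact hinv.sub_intCast _
    have hne : Int.fract (1 / y) ≠ 0 := by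
      intro hz
      exact (hfrac.ne_rat 0) (by rw [hz]; norm_num)
    exact ⟨⟨lt_of_le_of_ne (Int.fract_nonneg _) (Ne.symm hne), Int.fract_lt_one _⟩, hfrac⟩

section RCF
variable (x : ℝ) (hx : x ∈ Set.Ioo (0:ℝ) 1) (hirr : Irrational x)
include hx hirr

omit hx hirr in
lemma rcfA_eq (k : ℕ) : rcfA x (k + 1) = ⌊1 / gaussMap^[k] x⌋ := rfl

lemma rcfA_pos (k : ℕ) : 1 ≤ rcfA x (k + 1) := by
  obtain ⟨⟨h0, h1⟩, -⟩ := tail_mem x hx hirr k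
  rw [rcfA_eq]
  exact Int.le_floor.mpr (by push_cast; rw [le_div_iff₀ h0]; linarith)

lemma tail_rec (k : ℕ) :
    gaussMap^[k] x * ((rcfA x (k + 1) : ℝ) + gaussMap^[k + 1] x) = 1 := by
  obtain ⟨⟨h0, h1⟩, -⟩ := tail_mem x hx hirr k
  rw [rcfA_eq, Function.iterate_succ_apply', gaussMap, if_neg (ne_of_gt h0)]
  field_simp
  ring

lemma q_facts : ∀ k, 0 < rcfQ x k ∧ rcfQ x k ≤ rcfQ x (k + 1) := by
  intro k
  induction k with
  | zero => exact ⟨one_pos, by simpa [rcfQ] using rcfA_pos x hx hirr 0⟩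
  | succ k ih =>
    obtain ⟨h0, h1⟩ := ih
    have h2 : 0 < rcfQ x (k + 1) := lt_of_lt_of_le h0 h1
    have ha := rcfA_pos x hx hirr (k + 1)
    refine ⟨h2, ?_⟩
    show rcfQ x (k+1) ≤ rcfA x (k+2) * rcfQ x (k+1) + rcfQ x k
    nlinarith

lemma q_pos (k : ℕ) : 0 < rcfQ x k := (q_facts x hx hirr k).1

lemma qa_bounds (k : ℕ) :
    rcfA x (k + 1) * rcfQ x k ≤ rcfQ x (k + 1) ∧
    rcfQ x (k + 1) ≤ (rcfA x (k + 1) + 1) * rcfQ x k := by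
  cases k with
  | zero => simp [rcfQ]
  | succ k =>
    obtain ⟨h0, h1⟩ := q_facts x hx hirr k
    have h2 : 0 < rcfQ x (k+1) := lt_of_lt_of_le h0 h1
    constructor
    · show rcfA x (k+2) * rcfQ x (k+1) ≤ rcfA x (k+2) * rcfQ x (k+1) + rcfQ x k
      linarith
    · show rcfA x (k+2) * rcfQ x (k+1) + rcfQ x k ≤ (rcfA x (k+2) + 1) * rcfQ x (k+1)
      nlinarith

lemma conv_identity : ∀ k, x * ((rcfQ x (k+1) : ℝ) + (rcfQ x k : ℝ) * gaussMap^[k+1] x)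
    = (rcfP x (k+1) : ℝ) + (rcfP x k : ℝ) * gaussMap^[k+1] x := by
  intro k
  induction k with
  | zero =>
    have h := tail_rec x hx hirr 0
    simp only [Function.iterate_zero_apply] at h
    simp only [rcfQ, rcfP]
    push_cast
    linear_combination h
  | succ k ih =>
    have ht := tail_rec x hx hirr (k + 1)
    simp only [rcfQ, rcfP]
    push_cast
    linear_combination ((rcfA x (k+2) : ℝ) + gaussMap^[k+2] x) * ih
      - (x * (rcfQ x k : ℝ) - (rcfP x k : ℝ)) * ht

omit hx hirr in
lemma det_eq : ∀ k, rcfP x k * rcfQ x (k+1) - rcfP x (k+1) * rcfQ x k = (-1)^(k+1) := by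
  intro k
  induction k with
  | zero => simp [rcfP, rcfQ]
  | succ k ih =>
    show rcfP x (k+1) * (rcfA x (k+2) * rcfQ x (k+1) + rcfQ x k)
        - (rcfA x (k+2) * rcfP x (k+1) + rcfP x k) * rcfQ x (k+1) = (-1)^(k+2)
    linear_combination (-1 : ℤ) * ih


lemma theta_lo (k : ℕ) :
    Theta x k = (rcfQ x k : ℝ) /
      ((rcfQ x (k+1) : ℝ) + (rcfQ x k : ℝ) * gaussMap^[k+1] x) := by
  obtain ⟨⟨hs0, hs1⟩, -⟩ := tail_mem x hx hirr (k+1)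
  set s := gaussMap^[k+1] x
  have hC : (0:ℝ) < (rcfQ x (k+1) : ℝ) := by exact_mod_cast q_pos x hx hirr (k+1)
  have hE : (0:ℝ) < (rcfQ x k : ℝ) := by exact_mod_cast q_pos x hx hirr k
  set C := (rcfQ x (k+1) : ℝ); set E := (rcfQ x k : ℝ)
  set A := (rcfP x (k+1) : ℝ); set B := (rcfP x k : ℝ)
  have hden : 0 < C + E * s := by nlinarith
  have hid : x * (C + E * s) = A + B * s := conv_identity x hx hirr k
  have hdet : B * C - A * E = (-1)^(k+1) := by
    have h := congrArg (fun z : ℤ => (z : ℝ)) (det_eq x k)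
    push_cast at h
    exact h
  have key1 : (x * E - B) * (C + E * s) = (-1)^k := by
    linear_combination E * hid - hdet
  have habs : |x * E - B| = 1 / (C + E * s) := by
    have h2 : x * E - B = (-1)^k / (C + E * s) := by
      rw [eq_div_iff hden.ne']; exact key1
    rw [h2, abs_div, abs_pow, abs_neg, abs_one, one_pow, abs_of_pos hden]
  have hsub : x - B / E = (x * E - B) / E := by field_simp
  rw [Theta, hsub, abs_div, abs_of_pos hE, habs]
  field_simp
  ring

lemma theta_hi (k : ℕ) :
    Theta x (k+1) = (rcfQ x (k+1) : ℝ) * gaussMap^[k+1] x /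
      ((rcfQ x (k+1) : ℝ) + (rcfQ x k : ℝ) * gaussMap^[k+1] x) := by
  obtain ⟨⟨hs0, hs1⟩, -⟩ := tail_mem x hx hirr (k+1)
  set s := gaussMap^[k+1] x
  have hC : (0:ℝ) < (rcfQ x (k+1) : ℝ) := by exact_mod_cast q_pos x hx hirr (k+1)
  have hE : (0:ℝ) < (rcfQ x k : ℝ) := by exact_mod_cast q_pos x hx hirr k
  set C := (rcfQ x (k+1) : ℝ); set E := (rcfQ x k : ℝ)
  set A := (rcfP x (k+1) : ℝ); set B := (rcfP x k : ℝ)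
  have hden : 0 < C + E * s := by nlinarith
  have hid : x * (C + E * s) = A + B * s := conv_identity x hx hirr k
  have hdet : B * C - A * E = (-1)^(k+1) := by
    have h := congrArg (fun z : ℤ => (z : ℝ)) (det_eq x k)
    push_cast at h
    exact h
  have key1 : (x * C - A) * (C + E * s) = (-1)^(k+1) * s := by
    linear_combination C * hid + s * hdet
  have habs : |x * C - A| = s / (C + E * s) := by
    have h2 : x * C - A = (-1)^(k+1) * s / (C + E * s) := by
      rw [eq_div_iff hden.ne']; exact key1
    rw [h2, abs_div, abs_mul, abs_pow, abs_neg, abs_one, one_pow, one_mul,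
      abs_of_pos hs0, abs_of_pos hden]
  have hsub : x - A / C = (x * C - A) / C := by field_simp
  rw [Theta, hsub, abs_div, abs_of_pos hC, habs]
  field_simp
  ring

end RCF


section Ineq
variable (m M E F α : ℝ) (hm : 1 ≤ m) (hM : m + 1 ≤ M) (hF : 0 < F) (hE : 0 < E)
  (hα : 0 < α)

include hm hM hF hE hα

lemma den_pos : 0 < (m+1)*M + (m+2)*(M+1) := by nlinarith

lemma d2_pos : 0 < (E + F) * (1 + α) + E := by nlinarith

-- case 1: E ≤ (m+1)F, M·α ≤ 1 ≤ (M+1)·α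
lemma ineqA (h1 : E ≤ (m+1)*F) (h2 : M*α ≤ 1) :
    E * (1 + α) / ((E + F) * (1 + α) + E) ≤ (m+1)*(M+1) / ((m+1)*M + (m+2)*(M+1)) := by
  rw [div_le_div_iff₀ (d2_pos m M E F α hm hM hF hE hα) (den_pos m M E F α hm hM hF hE hα)]
  have cA : (0:ℝ) ≤ M - m + α*(1+2*M+m*M) := by
    nlinarith [mul_nonneg hα.le (by nlinarith : (0:ℝ) ≤ 1+2*M+m*M)]
  have t1 : (0:ℝ) ≤ ((m+1)*F - E) * (M - m + α*(1+2*M+m*M)) :=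
    mul_nonneg (by linarith) cA
  have t2 : (0:ℝ) ≤ ((1+m)^2*F)*(1 - M*α) := mul_nonneg (by positivity) (by linarith)
  nlinarith [t1, t2]

lemma ineqB (h1 : E ≤ (m+1)*F) (h2 : M*α ≤ 1) (h3 : 1 ≤ (M+1)*α) :
    (E + F) / ((E + F) * (1 + α) + E) ≥ (m+2)*M / ((m+1)*M + (m+2)*(M+1)) := by
  rw [ge_iff_le, div_le_div_iff₀ (den_pos m M E F α hm hM hF hE hα) (d2_pos m M E F α hm hM hF hE hα)]
  have cB : (0:ℝ) ≤ M - m - 2 + α*M*(m+2) := by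
    have hp : (0:ℝ) ≤ (M+1)*(M - m - 2 + α*M*(m+2)) := by
      nlinarith [mul_nonneg (mul_nonneg (by linarith : (0:ℝ) ≤ M) (by linarith : (0:ℝ) ≤ m+2)) (by linarith : (0:ℝ) ≤ (M+1)*α - 1),
        mul_nonneg (by linarith : (0:ℝ) ≤ M - m - 1) (by linarith : (0:ℝ) ≤ M - 1),
        mul_nonneg (by linarith : (0:ℝ) ≤ m) (by linarith : (0:ℝ) ≤ M - m - 1)]
    nlinarith [hp]
  have t1 : (0:ℝ) ≤ ((m+1)*F - E) * (M - m - 2 + α*M*(m+2)) :=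
    mul_nonneg (by linarith) cB
  have t2 : (0:ℝ) ≤ (F*(m+2)^2)*(1 - M*α) := mul_nonneg (by positivity) (by linarith)
  nlinarith [t1, t2]

-- case 2: M·F ≤ E, 1 ≤ (m+1)·α
lemma ineqC (h1 : M*F ≤ E) (h2 : 1 ≤ (m+1)*α) :
    (E + F) / ((E + F) * (1 + α) + E) ≤ (m+1)*(M+1) / ((m+1)*M + (m+2)*(M+1)) := by
  rw [div_le_div_iff₀ (d2_pos m M E F α hm hM hF hE hα) (den_pos m M E F α hm hM hF hE hα)]
  have cC : (0:ℝ) ≤ m - M + (1+m)*(1+M)*α := by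
    nlinarith [mul_nonneg (by linarith : (0:ℝ) ≤ 1 + M) (by linarith : (0:ℝ) ≤ (m+1)*α - 1)]
  have t1 : (0:ℝ) ≤ (E - M*F) * (m - M + (1+m)*(1+M)*α) := mul_nonneg (by linarith) cC
  have t2 : (0:ℝ) ≤ (F*(M+1)^2)*((m+1)*α - 1) := mul_nonneg (by positivity) (by linarith)
  nlinarith [t1, t2]

lemma ineqD (h1 : M*F ≤ E) (h2 : 1 ≤ (m+1)*α) :
    E * (1 + α) / ((E + F) * (1 + α) + E) ≥ (m+2)*M / ((m+1)*M + (m+2)*(M+1)) := by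
  rw [ge_iff_le, div_le_div_iff₀ (den_pos m M E F α hm hM hF hE hα) (d2_pos m M E F α hm hM hF hE hα)]
  have t1 : (0:ℝ) ≤ (E - M*F) * ((m+2)*(1+α)) :=
    mul_nonneg (by linarith) (by nlinarith)
  have t2 : (0:ℝ) ≤ (E*M)*((1+m)*α - 1) :=
    mul_nonneg (mul_nonneg hE.le (by linarith)) (by linarith)
  nlinarith [t1, t2]

end Ineq

theorem difficult_case_ne (x : ℝ) (hx : x ∈ Set.Ioo (0 : ℝ) 1) (hirr : Irrational x)
    (n : ℕ) (hn : 2 ≤ n) (m M : ℕ) (hm : 1 ≤ m) (hmM : m < M)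
    (han : rcfA x n = 1) (han1 : rcfA x (n + 1) = 1)
    (hminA : min (rcfA x (n - 1)) (rcfA x (n + 2)) = m)
    (hmaxA : max (rcfA x (n - 1)) (rcfA x (n + 2)) = M) :
    min (Theta x (n - 1)) (Theta x n) ≤
        ((m : ℝ) + 1) * ((M : ℝ) + 1) /
          (((m : ℝ) + 1) * M + ((m : ℝ) + 2) * ((M : ℝ) + 1)) ∧
      max (Theta x (n - 1)) (Theta x n) ≥
        ((m : ℝ) + 2) * M /
          (((m : ℝ) + 1) * M + ((m : ℝ) + 2) * ((M : ℝ) + 1)) := by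
  obtain ⟨k, rfl⟩ : ∃ k, n = k + 2 := ⟨n - 2, by omega⟩
  simp only [show k + 2 - 1 = k + 1 from rfl, show k + 2 + 1 = k + 3 from rfl,
    show k + 2 + 2 = k + 4 from rfl] at han1 hminA hmaxA ⊢
  -- tails
  obtain ⟨⟨hs0, hs1⟩, -⟩ := tail_mem x hx hirr (k + 2)
  obtain ⟨⟨hα0, hα1⟩, -⟩ := tail_mem x hx hirr (k + 3)
  set s := gaussMap^[k + 2] x with hs_def
  set α := gaussMap^[k + 3] x with hα_def
  -- denominators
  have hqk : (0:ℝ) < (rcfQ x k : ℝ) := by exact_mod_cast q_pos x hx hirr k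
  have hqk1 : (0:ℝ) < (rcfQ x (k+1) : ℝ) := by exact_mod_cast q_pos x hx hirr (k+1)
  set F := (rcfQ x k : ℝ) with hF_def
  set E := (rcfQ x (k+1) : ℝ) with hE_def
  -- q_{k+2} = E + F  (using a_{k+2} = 1)
  have hCE : (rcfQ x (k+2) : ℝ) = E + F := by
    have h : rcfQ x (k+2) = rcfA x (k+2) * rcfQ x (k+1) + rcfQ x k := rfl
    rw [h, han]
    push_cast
    ring
  -- s (1 + α) = 1  (using a_{k+3} = 1)
  have hs : s * (1 + α) = 1 := by
    have h := tail_rec x hx hirr (k + 2)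
    rw [han1] at h
    push_cast at h
    linarith [h]
  have h1α : (0:ℝ) < 1 + α := by linarith
  -- Theta formulas
  have hT1 : Theta x (k+1) = E / ((E + F) + E * s) := by
    rw [theta_lo x hx hirr (k+1), hCE]
  have hT2 : Theta x (k+2) = (E + F) * s / ((E + F) + E * s) := by
    rw [theta_hi x hx hirr (k+1), hCE]
  have hd1 : (0:ℝ) < (E + F) + E * s := by nlinarith
  have hd2 : (0:ℝ) < (E + F) * (1 + α) + E := by nlinarith
  have conv1 : E / ((E + F) + E * s) = E * (1 + α) / ((E + F) * (1 + α) + E) := by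
    rw [div_eq_div_iff hd1.ne' hd2.ne']
    linear_combination (-E^2) * hs
  have conv2 : (E + F) * s / ((E + F) + E * s) = (E + F) / ((E + F) * (1 + α) + E) := by
    rw [div_eq_div_iff hd1.ne' hd2.ne']
    linear_combination ((E + F)^2) * hs
  rw [hT1, hT2, conv1, conv2]
  -- partial quotient bounds
  have hqa := qa_bounds x hx hirr k
  have hfl : (rcfA x (k+4) : ℝ) ≤ 1 / α ∧ 1 / α < (rcfA x (k+4) : ℝ) + 1 := by
    rw [rcfA_eq]
    exact ⟨Int.floor_le _, Int.lt_floor_add_one _⟩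
  -- cast of m, M facts
  have hmR : (1:ℝ) ≤ (m:ℝ) := by exact_mod_cast hm
  have hMR : (m:ℝ) + 1 ≤ (M:ℝ) := by exact_mod_cast hmM
  rcases le_total (rcfA x (k+1)) (rcfA x (k+4)) with hc | hc
  · -- a_{k+1} = m, a_{k+4} = M
    have e1 : rcfA x (k+1) = (m:ℤ) := by rw [← hminA, min_eq_left hc]
    have e2 : rcfA x (k+4) = (M:ℤ) := by rw [← hmaxA, max_eq_right hc]
    have h1 : E ≤ ((m:ℝ) + 1) * F := by
      have := hqa.2
      rw [e1] at this
      rw [hE_def, hF_def]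
      exact_mod_cast this
    have h2 : (M:ℝ) * α ≤ 1 := by
      have := hfl.1
      rw [e2] at this
      push_cast at this
      calc (M:ℝ) * α ≤ (1/α) * α := by
            apply mul_le_mul_of_nonneg_right this hα0.le
        _ = 1 := by field_simp
    have h3 : 1 ≤ ((M:ℝ) + 1) * α := by
      have := hfl.2
      rw [e2] at this
      push_cast at this
      have := (div_lt_iff₀ hα0).mp this
      linarith
    exact ⟨le_trans (min_le_left _ _) (ineqA (m:ℝ) (M:ℝ) E F α hmR hMR hqk hqk1 hα0 h1 h2),
      le_trans (ineqB (m:ℝ) (M:ℝ) E F α hmR hMR hqk hqk1 hα0 h1 h2 h3) (le_max_right _ _)⟩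
  · -- a_{k+1} = M, a_{k+4} = m
    have e1 : rcfA x (k+1) = (M:ℤ) := by rw [← hmaxA, max_eq_left hc]
    have e2 : rcfA x (k+4) = (m:ℤ) := by rw [← hminA, min_eq_right hc]
    have h1 : (M:ℝ) * F ≤ E := by
      have := hqa.1
      rw [e1] at this
      rw [hE_def, hF_def]
      exact_mod_cast this
    have h2 : 1 ≤ ((m:ℝ) + 1) * α := by
      have := hfl.2
      rw [e2] at this
      push_cast at this
      have := (div_lt_iff₀ hα0).mp this
      linarith
    exact ⟨le_trans (min_le_right _ _) (ineqC (m:ℝ) (M:ℝ) E F α hmR hMR hqk hqk1 hα0 h1 h2),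
      le_trans (ineqD (m:ℝ) (M:ℝ) E F α hmR hMR hqk hqk1 hα0 h1 h2) (le_max_left _ _)⟩
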